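/- For all integers k, c and every natural number m, the following identity holds in ℚ(q): qbinom(k+1, m+1)·([c][k−m] − [m+1][c+k−1]) = qbinom(k−1, m+1)·[k+1]·[c−(m+1)] − qbinom(k−1, m−1)·[k+1]·[c+2k−(m+1)]. (Here qbinom(k−1, m+1) = [k−(m+1)][k−m]⋯[k−1]/[m+1]! and qbinom(k−1, m−1) = [k−(m−1)][k−m+2]⋯[k−1]/[m−1]!.) -/
import Mathlib


open scoped BigOperators

/-- The generator `q` of the field of rational functions `ℚ(q)`. -/
noncomputable def q : RatFunc ℚ := RatFunc.X

/-- The balanced quantum integer `[a] = (q^a - q^(-a))/(q - q⁻¹)`. -/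
noncomputable def qint (a : ℤ) : RatFunc ℚ := (q ^ a - q ^ (-a)) / (q - q⁻¹)

/-- The quantum factorial `[k]! = [1][2]⋯[k]`. -/
noncomputable def qfact (k : ℕ) : RatFunc ℚ := ∏ i ∈ Finset.range k, qint ((i : ℤ) + 1)

/-- The balanced quantum binomial `qbinom a b = [a][a-1]⋯[a-b+1]/[b]!` for `b ≥ 0`,
and `0` for `b < 0`. -/
noncomputable def qbinom (a b : ℤ) : RatFunc ℚ :=
  if b < 0 then 0
  else (∏ i ∈ Finset.range b.toNat, qint (a - (i : ℤ))) / qfact b.toNat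

lemma hq0 : q ≠ 0 := RatFunc.X_ne_zero

lemma q_pow_ne_one (n : ℕ) (hn : n ≠ 0) : q ^ n ≠ 1 := by
  intro h
  have h2 : (algebraMap (Polynomial ℚ) (RatFunc ℚ)) (Polynomial.X ^ n) =
      (algebraMap (Polynomial ℚ) (RatFunc ℚ)) 1 := by
    simpa [map_pow, RatFunc.algebraMap_X, q] using h
  have := RatFunc.algebraMap_injective ℚ h2
  have := congrArg Polynomial.natDegree this
  simp [Polynomial.natDegree_X_pow] at this
  exact hn this

lemma q_zpow_ne_one (a : ℤ) (ha : 0 < a) : q ^ a ≠ 1 := by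
  intro h
  have : q ^ (a.toNat) ≠ 1 := q_pow_ne_one a.toNat (by omega)
  rw [← zpow_natCast, Int.toNat_of_nonneg ha.le] at this
  exact this h

lemma hd0 : q - q⁻¹ ≠ 0 := by
  intro h
  have hq2 : q ^ (2:ℤ) = 1 := by
    have h1 : q = q⁻¹ := by linear_combination h
    have : q * q = 1 := by nth_rewrite 2 [h1]; exact mul_inv_cancel₀ hq0
    rw [show (2:ℤ) = 1 + 1 by norm_num, zpow_add₀ hq0, zpow_one]
    exact this
  exact q_zpow_ne_one 2 (by norm_num) hq2

lemma qint_ne_zero (a : ℤ) (ha : 0 < a) : qint a ≠ 0 := by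
  rw [qint, div_ne_zero_iff]
  refine ⟨?_, hd0⟩
  intro h
  have : q ^ (2 * a) = 1 := by
    have h1 : q ^ a = q ^ (-a) := by linear_combination h
    rw [two_mul, zpow_add₀ hq0]
    nth_rewrite 2 [h1]
    rw [← zpow_add₀ hq0]
    simp
  exact q_zpow_ne_one (2 * a) (by omega) this

lemma qfact_ne_zero (t : ℕ) : qfact t ≠ 0 := by
  rw [qfact]
  exact Finset.prod_ne_zero_iff.2 fun i _ => qint_ne_zero _ (by positivity)

lemma qint_one : qint 1 = 1 := by
  rw [qint, zpow_one, show ((-1:ℤ)) = -1 from rfl, zpow_neg, zpow_one]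
  exact div_self hd0

lemma qfact_one : qfact 1 = 1 := by
  simp [qfact, qint_one]

lemma qfact_succ (t : ℕ) : qfact (t + 1) = qfact t * qint ((t : ℤ) + 1) := by
  rw [qfact, qfact, Finset.prod_range_succ]

lemma qbinom_eval (a b : ℤ) (t : ℕ) (hb : b = (t : ℤ)) :
    qbinom a b = (∏ i ∈ Finset.range t, qint (a - (i : ℤ))) / qfact t := by
  subst hb
  rw [qbinom, if_neg (by exact not_lt.2 (Int.natCast_nonneg t))]
  simp

lemma qbinom_neg_one (a : ℤ) : qbinom a (-1) = 0 := by
  rw [qbinom, if_pos (by norm_num)]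

lemma prod_front (a : ℤ) (t : ℕ) :
    (∏ i ∈ Finset.range (t + 1), qint (a - (i : ℤ)))
      = qint a * ∏ i ∈ Finset.range t, qint (a - 1 - (i : ℤ)) := by
  rw [Finset.prod_range_succ']
  simp only [Nat.cast_zero, sub_zero, Nat.cast_add, Nat.cast_one]
  rw [mul_comm]
  congr 1
  refine Finset.prod_congr rfl fun i _ => ?_
  congr 1
  ring

lemma qq_div3 (n1 n2 n3 n4 n5 m1 m2 m3 m4 m5 m6 d : RatFunc ℚ)
    (h : n1 * (n2 * n3 - n4 * n5) = m1 * m2 * m3 - m4 * m5 * m6) :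
    n1 / d * (n2 / d * (n3 / d) - n4 / d * (n5 / d))
      = m1 / d * (m2 / d) * (m3 / d) - m4 / d * (m5 / d) * (m6 / d) := by
  simp only [div_eq_mul_inv]
  linear_combination d⁻¹ * d⁻¹ * d⁻¹ * h

lemma key0 (k c : ℤ) :
    qint c * qint k - qint (c + k - 1) - qint (k - 1) * qint (c - 1) = 0 := by
  have hw : q * q⁻¹ = 1 := mul_inv_cancel₀ hq0
  have main : qint c * qint k - qint (c + k - 1) * qint 1 = qint (k - 1) * qint (c - 1) := by
    simp only [qint]
    have h3 : (q ^ c - q ^ (-c)) * (q ^ k - q ^ (-k))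
        - (q ^ (c + k - 1) - q ^ (-(c + k - 1))) * (q ^ (1:ℤ) - q ^ (-(1:ℤ)))
        = (q ^ (k - 1) - q ^ (-(k - 1))) * (q ^ (c - 1) - q ^ (-(c - 1))) := by
      simp only [sub_eq_add_neg, neg_add, neg_neg, zpow_add₀ hq0, zpow_neg, zpow_one]
      linear_combination (-(q^k)⁻¹*(q^c)⁻¹ + (q^k)⁻¹*(q^c) + (q^k)*(q^c)⁻¹ + -(q^k)*(q^c)) * hw
    simp only [div_eq_mul_inv]
    linear_combination (q - q⁻¹)⁻¹ * (q - q⁻¹)⁻¹ * h3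
  rw [qint_one, mul_one] at main
  linear_combination main

lemma key1 (k c : ℤ) (n : ℕ) :
    qint k * (qint c * qint (k - ((n:ℤ) + 1)) - qint ((n:ℤ) + 1 + 1) * qint (c + k - 1)) =
      qint (k - 1 - (n:ℤ)) * qint (k - 1 - ((n:ℤ) + 1)) * qint (c - ((n:ℤ) + 1 + 1)) -
        qint ((n:ℤ) + 1 + 1) * qint ((n:ℤ) + 1) * qint (c + 2 * k - ((n:ℤ) + 1 + 1)) := by
  have hw : q * q⁻¹ = 1 := mul_inv_cancel₀ hq0
  have hK : q ^ k * (q ^ k)⁻¹ = 1 := mul_inv_cancel₀ (zpow_ne_zero _ hq0)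
  have hM : (q ^ (n:ℤ) * q) * ((q ^ (n:ℤ))⁻¹ * q⁻¹) = 1 := by
    rw [mul_mul_mul_comm, mul_inv_cancel₀ (zpow_ne_zero _ hq0), mul_inv_cancel₀ hq0, one_mul]
  simp only [qint]
  apply qq_div3
  rw [show c + 2 * k - ((n:ℤ) + 1 + 1) = c + (k + k) - ((n:ℤ) + 1 + 1) by ring]
  simp only [sub_eq_add_neg, neg_add, neg_neg, zpow_add₀ hq0, zpow_neg, zpow_one]
  linear_combination
    ((q^c)⁻¹*((q^(n:ℤ))⁻¹*q⁻¹) + -(q^c)⁻¹*((q^(n:ℤ))⁻¹*q⁻¹)*q*q⁻¹ + (q^c)⁻¹*(q^(n:ℤ)*q) +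
      (q^c)⁻¹*(q^(n:ℤ)*q)*q^2 + -(q^c)⁻¹*(q^(n:ℤ)*q)^2*((q^(n:ℤ))⁻¹*q⁻¹)*q*q⁻¹ +
      -(q^c)⁻¹*(q^(n:ℤ)*q)^2*((q^(n:ℤ))⁻¹*q⁻¹)*q^2 + -(q^c)*((q^(n:ℤ))⁻¹*q⁻¹) +
      -(q^c)*((q^(n:ℤ))⁻¹*q⁻¹)*q⁻¹^2 + -(q^c)*(q^(n:ℤ)*q) + (q^c)*(q^(n:ℤ)*q)*q*q⁻¹ +
      (q^c)*(q^(n:ℤ)*q)*((q^(n:ℤ))⁻¹*q⁻¹)^2*q⁻¹^2 +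
      (q^c)*(q^(n:ℤ)*q)*((q^(n:ℤ))⁻¹*q⁻¹)^2*q*q⁻¹) * hK +
    (-(q^c)⁻¹*(q^(n:ℤ)*q)*q*q⁻¹ + -(q^c)⁻¹*(q^(n:ℤ)*q)*q^2 + (q^c)*((q^(n:ℤ))⁻¹*q⁻¹)*q⁻¹^2 +
      (q^c)*((q^(n:ℤ))⁻¹*q⁻¹)*q*q⁻¹ + -(q^k)⁻¹^2*(q^c)⁻¹*((q^(n:ℤ))⁻¹*q⁻¹)*q*q⁻¹ +
      (q^k)⁻¹^2*(q^c)⁻¹*(q^(n:ℤ)*q)*q*q⁻¹ + (q^k)⁻¹^2*(q^c)⁻¹*(q^(n:ℤ)*q)*q^2 +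
      -(q^k)⁻¹^2*(q^c)*(q^(n:ℤ)*q)*q*q⁻¹ + (q^k)^2*(q^c)⁻¹*((q^(n:ℤ))⁻¹*q⁻¹)*q*q⁻¹ +
      -(q^k)^2*(q^c)*((q^(n:ℤ))⁻¹*q⁻¹)*q⁻¹^2 + -(q^k)^2*(q^c)*((q^(n:ℤ))⁻¹*q⁻¹)*q*q⁻¹ +
      (q^k)^2*(q^c)*(q^(n:ℤ)*q)*q*q⁻¹) * hM +
    (-(q^c)⁻¹*((q^(n:ℤ))⁻¹*q⁻¹) + -(q^c)⁻¹*(q^(n:ℤ)*q) + (q^c)*((q^(n:ℤ))⁻¹*q⁻¹) +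
      (q^c)*(q^(n:ℤ)*q) + (q^k)⁻¹^2*(q^c)⁻¹*(q^(n:ℤ)*q) + -(q^k)⁻¹^2*(q^c)*(q^(n:ℤ)*q) +
      (q^k)^2*(q^c)⁻¹*((q^(n:ℤ))⁻¹*q⁻¹) + -(q^k)^2*(q^c)*((q^(n:ℤ))⁻¹*q⁻¹)) * hw

lemma qq_assemble (a b D S F1 e1 e2 g3 g4 u v : RatFunc ℚ)
    (he : e1 * e2 ≠ 0)
    (hkey : b * S = g3 * g4 * u - e2 * e1 * v) :
    a * (b * D) / (F1 * e1 * e2) * S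
      = D * g3 * g4 / (F1 * e1 * e2) * a * u - D / F1 * a * v := by
  have h2 : D / F1 = D * (e1 * e2) / (F1 * e1 * e2) := by
    rw [mul_assoc]; exact (mul_div_mul_right D F1 he).symm
  rw [h2]
  simp only [div_mul_eq_mul_div]
  rw [← sub_div]
  congr 1
  linear_combination (a * D) * hkey

lemma main_succ (k c : ℤ) (n : ℕ) :
    qbinom (k + 1) (((n:ℤ) + 1) + 1) *
        (qint c * qint (k - ((n:ℤ) + 1)) - qint (((n:ℤ) + 1) + 1) * qint (c + k - 1)) =
      qbinom (k - 1) (((n:ℤ) + 1) + 1) * qint (k + 1) * qint (c - (((n:ℤ) + 1) + 1)) -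
        qbinom (k - 1) (((n:ℤ) + 1) - 1) * qint (k + 1) *
          qint (c + 2 * k - (((n:ℤ) + 1) + 1)) := by
  rw [qbinom_eval (k + 1) _ (n + 2) (by push_cast; ring),
      qbinom_eval (k - 1) (((n:ℤ) + 1) + 1) (n + 2) (by push_cast; ring),
      qbinom_eval (k - 1) (((n:ℤ) + 1) - 1) n (by push_cast; ring)]
  rw [show n + 2 = n + 1 + 1 from rfl]
  rw [prod_front (k + 1) (n + 1), prod_front (k + 1 - 1) n]
  rw [show (k + 1 - 1 : ℤ) = k by ring]
  rw [Finset.prod_range_succ, Finset.prod_range_succ]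
  rw [qfact_succ (n + 1), qfact_succ n]
  rw [show ((n + 1 : ℕ) : ℤ) = (n : ℤ) + 1 by push_cast; ring]
  exact qq_assemble _ _ _ _ _ _ _ _ _ _ _
    (mul_ne_zero (qint_ne_zero _ (by positivity)) (qint_ne_zero _ (by positivity)))
    (key1 k c n)

/-- The q-binomial identity of Lemma 4.14:
`qbinom(k+1,m+1)·([c][k−m] − [m+1][c+k−1])
  = qbinom(k−1,m+1)·[k+1]·[c−(m+1)] − qbinom(k−1,m−1)·[k+1]·[c+2k−(m+1)]`. -/
theorem qbinom_identity (k c : ℤ) (m : ℕ) :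
    qbinom (k + 1) ((m : ℤ) + 1) *
        (qint c * qint (k - (m : ℤ)) - qint ((m : ℤ) + 1) * qint (c + k - 1)) =
      qbinom (k - 1) ((m : ℤ) + 1) * qint (k + 1) * qint (c - ((m : ℤ) + 1)) -
        qbinom (k - 1) ((m : ℤ) - 1) * qint (k + 1) * qint (c + 2 * k - ((m : ℤ) + 1)) := by
  cases m with
  | zero =>
    simp only [Nat.cast_zero, zero_add, sub_zero, zero_sub]
    rw [qbinom_eval (k + 1) 1 1 (by norm_num), qbinom_eval (k - 1) 1 1 (by norm_num),
        qbinom_neg_one]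
    simp only [Finset.prod_range_one, Nat.cast_zero, sub_zero, qfact_one, div_one,
      qint_one, one_mul, zero_mul, sub_zero]
    linear_combination qint (k + 1) * key0 k c
  | succ n =>
    exact main_succ k c n
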